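/- arXiv:0706.1409 — 2 statements merged into one kernel-verified Lean document; each statement's English description precedes it below -/
import Mathlib

section
/- For every integer k ≥ 0, (k+1)²·C_{2,k} = 4(k+2)²·C_{2,k+2}, where C_{2,k} = (1/2)∫₀^∞∫₀^∞ (cosh x + cosh y)^{-(k+1)} dx dy. -/
/-!
Substituting `y = x - 2v` and using `cosh x + cosh (x - 2v) = 2 cosh (x - v) cosh v`, the double
integral over the whole plane factors (Fubini plus translation invariance) as `2 / 2ⁿ · Kₙ²`, where
`Kₙ = ∫ sechⁿ` over `ℝ`; by evenness in each variable the quadrant carries a quarter of it, so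
`C₂ k = K_{k+1}² / 2^(k+3)`. Integrating `(sinh / coshⁿ⁺¹)' = (n+1) sechⁿ⁺² - n sechⁿ` over `ℝ`
gives `n Kₙ = (n+1) Kₙ₊₂`, and squaring it is the recurrence.
-/

open MeasureTheory

noncomputable def C₂ (k : ℕ) : ℝ :=
  (1 / 2) * ∫ x in Set.Ioi (0:ℝ), ∫ y in Set.Ioi (0:ℝ),
    1 / (Real.cosh x + Real.cosh y) ^ (k + 1)

open Real Set

lemma one_add_sq_le_four_mul_cosh (t : ℝ) : 1 + t ^ 2 ≤ 4 * cosh t := by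
  rw [← cosh_abs, cosh_eq]
  nlinarith [quadratic_le_exp_of_nonneg (abs_nonneg t), add_one_le_exp (-|t|), sq_abs t]

lemma abs_sinh_le_cosh (t : ℝ) : |sinh t| ≤ cosh t := by
  rw [abs_le, sinh_eq, cosh_eq]
  constructor <;> linarith [exp_pos t, exp_pos (-t)]

lemma integrable_inv_cosh_pow {n : ℕ} (hn : n ≠ 0) :
    Integrable fun t : ℝ => (cosh t ^ n)⁻¹ := by
  refine (integrable_inv_one_add_sq.const_mul 4).mono' (by fun_prop) (ae_of_all _ fun t => ?_)
  rw [norm_inv, norm_pow, norm_of_nonneg (cosh_pos t).le]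
  calc (cosh t ^ n)⁻¹ ≤ (cosh t)⁻¹ := inv_anti₀ (cosh_pos t) (le_self_pow₀ (one_le_cosh t) hn)
    _ ≤ 4 * (1 + t ^ 2)⁻¹ := by
      rw [← div_eq_mul_inv, inv_le_comm₀ (cosh_pos t) (by positivity), inv_div,
        div_le_iff₀' four_pos]
      exact one_add_sq_le_four_mul_cosh t

lemma hasDerivAt_sinh_mul_inv_cosh_pow (n : ℕ) (t : ℝ) :
    HasDerivAt (fun t => sinh t * (cosh t ^ (n + 1))⁻¹)
      ((n + 1) * (cosh t ^ (n + 2))⁻¹ - n * (cosh t ^ n)⁻¹) t := by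
  have hc : cosh t ≠ 0 := (cosh_pos t).ne'
  have h := (hasDerivAt_sinh t).fun_mul (((hasDerivAt_cosh t).fun_pow (n + 1)).inv
    (pow_ne_zero _ hc))
  refine h.congr_deriv ?_
  simp only [Pi.inv_apply, Nat.add_sub_cancel]
  field_simp
  push_cast
  linear_combination (-(↑n + 1) * cosh t ^ n * cosh t ^ n * cosh t ^ (n + 2)) * sinh_sq t

lemma integral_inv_cosh_pow_recurrence {n : ℕ} (hn : n ≠ 0) :
    n * ∫ t, (cosh t ^ n)⁻¹ = (n + 1) * ∫ t, (cosh t ^ (n + 2))⁻¹ := by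
  have hint := integrable_inv_cosh_pow hn
  have hint₂ := integrable_inv_cosh_pow (n := n + 2) (by omega)
  have hF : Integrable fun t => sinh t * (cosh t ^ (n + 1))⁻¹ := by
    refine hint.mono' (by fun_prop) (ae_of_all _ fun t => ?_)
    rw [norm_mul, norm_inv, norm_pow, norm_of_nonneg (cosh_pos t).le, pow_succ, mul_inv,
      ← mul_assoc, mul_comm, ← mul_assoc, Real.norm_eq_abs]
    refine mul_le_of_le_one_left (by positivity) ?_
    rw [inv_mul_le_one₀ (cosh_pos t)]
    exact abs_sinh_le_cosh t
  have h := integral_eq_zero_of_hasDerivAt_of_integrable (hasDerivAt_sinh_mul_inv_cosh_pow n)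
    ((hint₂.const_mul _).sub (hint.const_mul _)) hF
  rw [integral_sub (hint₂.const_mul _) (hint.const_mul _), integral_const_mul,
    integral_const_mul] at h
  linarith

lemma cosh_add_cosh_sub_two_mul (x v : ℝ) :
    cosh x + cosh (x - 2 * v) = 2 * cosh (x - v) * cosh v := by
  have h₁ := cosh_add (x - v) v
  have h₂ := cosh_sub (x - v) v
  rw [sub_add_cancel] at h₁
  rw [sub_sub, ← two_mul] at h₂
  rw [h₁, h₂]
  ring

lemma integral_comp_sub_two_mul {E : Type*} [NormedAddCommGroup E] [NormedSpace ℝ E]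
    (f : ℝ → E) (x : ℝ) : ∫ v, f (x - 2 * v) = (2 : ℝ)⁻¹ • ∫ y, f y := by
  rw [Measure.integral_comp_mul_left (fun w => f (x - w)) 2, integral_sub_left_eq_self,
    abs_of_pos (by norm_num)]

lemma integrable_inv_cosh_pow_sub_mul {n : ℕ} (hn : n ≠ 0) :
    Integrable (fun p : ℝ × ℝ => (cosh (p.1 - p.2) ^ n)⁻¹ * (cosh p.2 ^ n)⁻¹)
      (volume.prod volume) :=
  (measurePreserving_sub_prod volume volume).integrable_comp_of_integrable
    ((integrable_inv_cosh_pow hn).mul_prod (integrable_inv_cosh_pow hn))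

lemma integral_integral_inv_cosh_add_cosh_pow {n : ℕ} (hn : n ≠ 0) :
    ∫ x, ∫ y, ((cosh x + cosh y) ^ n)⁻¹ = 2 / 2 ^ n * (∫ t, (cosh t ^ n)⁻¹) ^ 2 := by
  calc ∫ x, ∫ y, ((cosh x + cosh y) ^ n)⁻¹
      = ∫ x, ∫ v, 2 / 2 ^ n * ((cosh (x - v) ^ n)⁻¹ * (cosh v ^ n)⁻¹) := by
        congr 1 with x
        have h := integral_comp_sub_two_mul (fun y => ((cosh x + cosh y) ^ n)⁻¹) x
        rw [smul_eq_mul, eq_inv_mul_iff_mul_eq₀ two_ne_zero] at h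
        rw [← h, ← integral_const_mul]
        congr 1 with v
        rw [cosh_add_cosh_sub_two_mul, mul_pow, mul_pow]
        field_simp
    _ = ∫ v, ∫ x, 2 / 2 ^ n * ((cosh (x - v) ^ n)⁻¹ * (cosh v ^ n)⁻¹) :=
        integral_integral_swap ((integrable_inv_cosh_pow_sub_mul hn).const_mul _)
    _ = ∫ v, 2 / 2 ^ n * (∫ t, (cosh t ^ n)⁻¹) * (cosh v ^ n)⁻¹ := by
        congr 1 with v
        rw [integral_const_mul, integral_mul_const,
          integral_sub_right_eq_self (fun t => (cosh t ^ n)⁻¹), mul_assoc]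
    _ = 2 / 2 ^ n * (∫ t, (cosh t ^ n)⁻¹) ^ 2 := by
        rw [integral_const_mul]
        ring

lemma integral_integral_eq_four_mul_integral_Ioi_integral_Ioi {f : ℝ → ℝ → ℝ}
    (hf : ∀ x y, f |x| |y| = f x y) :
    ∫ x, ∫ y, f x y = 4 * ∫ x in Ioi 0, ∫ y in Ioi 0, f x y := by
  calc ∫ x, ∫ y, f x y = ∫ x, ∫ y, f |x| |y| := by simp only [hf]
    _ = ∫ x, 2 * ∫ y in Ioi 0, f |x| y := by simp only [integral_comp_abs]
    _ = 4 * ∫ x in Ioi 0, ∫ y in Ioi 0, f x y := by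
      rw [integral_comp_abs (f := fun x => 2 * ∫ y in Ioi 0, f x y), integral_const_mul]
      ring

lemma C₂_eq_sq_integral_inv_cosh_pow (k : ℕ) :
    C₂ k = (∫ t, (cosh t ^ (k + 1))⁻¹) ^ 2 / 2 ^ (k + 3) := by
  have h := integral_integral_eq_four_mul_integral_Ioi_integral_Ioi
    (f := fun x y => ((cosh x + cosh y) ^ (k + 1))⁻¹) (by simp only [cosh_abs, implies_true])
  rw [integral_integral_inv_cosh_add_cosh_pow k.add_one_ne_zero] at h
  simp only [C₂, one_div]
  linear_combination -h / 8

theorem C2_recurrence (k : ℕ) :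
    ((k : ℝ) + 1) ^ 2 * C₂ k = 4 * ((k : ℝ) + 2) ^ 2 * C₂ (k + 2) := by
  have h := integral_inv_cosh_pow_recurrence (n := k + 1) k.add_one_ne_zero
  rw [C₂_eq_sq_integral_inv_cosh_pow, C₂_eq_sq_integral_inv_cosh_pow,
    show k + 2 + 1 = k + 1 + 2 by ring]
  set a := ∫ t, (cosh t ^ (k + 1))⁻¹
  set b := ∫ t, (cosh t ^ (k + 1 + 2))⁻¹
  push_cast at h
  linear_combination ((k + 1) * a + (k + 2) * b) / 2 ^ (k + 3) * h
end

section
/- The function y = K₀⁴ satisfies the fifth-order equation t⁴y⁽⁵⁾ + 10t³y⁽⁴⁾ - (20t⁴-25t²)y⁽³⁾ - (120t³-15t)y'' + (64t⁴-152t²+1)y' + (128t³-32t)y = 0 on (0,∞). -/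
/-!
Write `Mₙ(t) = ∫₀^∞ coshⁿ x e^{-t cosh x} dx`, so `K₀ = M₀`. Differentiating under the integral
gives `Mₙ' = -Mₙ₊₁`, and integrating `(sinh x e^{-t cosh x})'` over `(0, ∞)` gives the Bessel
relation `M₂ = M₀ + M₁ / t`. Hence `f = K₀`, `g = K₀'` satisfy `f' = g`, `g' = f - g / t`, and every
derivative of `f⁴` is a polynomial in `f`, `g`, `t⁻¹`, computed by a derivation on
`ℝ[X₀, X₁, X₂]`. The differential equation then reduces to an identity of rational functions.
-/

open MeasureTheory

noncomputable def K₀ (t : ℝ) : ℝ := ∫ x in Set.Ioi (0:ℝ), Real.exp (-t * Real.cosh x)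

noncomputable def y : ℝ → ℝ := fun t => (K₀ t) ^ 4

open Real Set Filter Topology MvPolynomial
open scoped Nat

theorem pow_le_factorial_div_pow_mul_exp {c s : ℝ} (hc : 0 ≤ c) (hs : 0 < s) (n : ℕ) :
    c ^ n ≤ n ! / s ^ n * exp (s * c) := by
  have h := pow_div_factorial_le_exp (s * c) (by positivity) n
  rw [div_le_iff₀ (by positivity), mul_pow] at h
  rw [div_mul_eq_mul_div, le_div_iff₀ (by positivity)]
  linarith

theorem self_le_cosh {x : ℝ} (hx : 0 ≤ x) : x ≤ cosh x :=
  (self_le_sinh_iff.mpr hx).trans (sinh_lt_cosh x).le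

theorem cosh_pow_mul_exp_le {t x : ℝ} (ht : 0 < t) (hx : 0 ≤ x) (n : ℕ) :
    cosh x ^ n * exp (-t * cosh x) ≤ n ! / (t / 2) ^ n * exp (-(t / 2) * x) :=
  calc cosh x ^ n * exp (-t * cosh x)
      ≤ n ! / (t / 2) ^ n * exp (t / 2 * cosh x) * exp (-t * cosh x) := by
        gcongr
        exact pow_le_factorial_div_pow_mul_exp (cosh_pos x).le (by positivity) n
    _ = n ! / (t / 2) ^ n * exp (-(t / 2) * cosh x) := by
        rw [mul_assoc, ← exp_add]
        ring_nf
    _ ≤ n ! / (t / 2) ^ n * exp (-(t / 2) * x) := by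
        gcongr n ! / (t / 2) ^ n * ?_
        exact exp_le_exp.mpr (by nlinarith [self_le_cosh hx])

theorem integrableOn_cosh_pow_mul_exp {t : ℝ} (ht : 0 < t) (n : ℕ) :
    IntegrableOn (fun x => cosh x ^ n * exp (-t * cosh x)) (Ioi 0) := by
  refine Integrable.mono' ((exp_neg_integrableOn_Ioi 0 (half_pos ht)).const_mul (n ! / (t / 2) ^ n))
    (by fun_prop : Continuous _).aestronglyMeasurable.restrict ?_
  refine (ae_restrict_iff' measurableSet_Ioi).mpr (ae_of_all _ fun x hx => ?_)
  rw [norm_of_nonneg (by positivity)]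
  exact cosh_pow_mul_exp_le ht (le_of_lt hx) n

noncomputable def coshMoment (n : ℕ) (t : ℝ) : ℝ :=
  ∫ x in Ioi 0, cosh x ^ n * exp (-t * cosh x)

theorem hasDerivAt_coshMoment {t : ℝ} (ht : 0 < t) (n : ℕ) :
    HasDerivAt (coshMoment n) (-coshMoment (n + 1) t) t := by
  have hderiv : ∀ x s : ℝ, HasDerivAt (fun s => cosh x ^ n * exp (-s * cosh x))
      (-(cosh x ^ (n + 1) * exp (-s * cosh x))) s := fun x s => by
    refine (((hasDerivAt_neg s).mul_const (cosh x)).exp.const_mul (cosh x ^ n)).congr_deriv ?_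
    ring
  have h := hasDerivAt_integral_of_dominated_loc_of_deriv_le
    (F := fun s x => cosh x ^ n * exp (-s * cosh x))
    (F' := fun s x => -(cosh x ^ (n + 1) * exp (-s * cosh x))) (μ := volume.restrict (Ioi 0))
    (bound := fun x => cosh x ^ (n + 1) * exp (-(t / 2) * cosh x))
    (Ioi_mem_nhds (half_lt_self ht))
    (Eventually.of_forall fun s => (by fun_prop : Continuous _).aestronglyMeasurable)
    (integrableOn_cosh_pow_mul_exp ht n)
    (by fun_prop : Continuous _).aestronglyMeasurable
    (ae_of_all _ fun x s (hs : t / 2 < s) => by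
      rw [norm_neg, norm_of_nonneg (by positivity)]
      gcongr)
    (integrableOn_cosh_pow_mul_exp (half_pos ht) (n + 1))
    (ae_of_all _ fun x s _ => hderiv x s)
  unfold coshMoment
  rw [← integral_neg]
  exact h.2

theorem tendsto_sinh_mul_exp_neg_cosh {t : ℝ} (ht : 0 < t) :
    Tendsto (fun x => sinh x * exp (-t * cosh x)) atTop (𝓝 0) := by
  have hdecay : Tendsto (fun x => exp (-(t / 2) * x)) atTop (𝓝 0) :=
    tendsto_exp_comp_nhds_zero.mpr (tendsto_id.const_mul_atTop_of_neg (by linarith))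
  refine squeeze_zero_norm' ?_ (by simpa only [mul_zero] using hdecay.const_mul (1 ! / (t / 2) ^ 1))
  filter_upwards [eventually_ge_atTop 0] with x hx
  calc ‖sinh x * exp (-t * cosh x)‖ = sinh x * exp (-t * cosh x) :=
        norm_of_nonneg (mul_nonneg (sinh_nonneg_iff.mpr hx) (exp_pos _).le)
    _ ≤ cosh x ^ 1 * exp (-t * cosh x) := by
        rw [pow_one]
        gcongr
        exact (sinh_lt_cosh x).le
    _ ≤ _ := cosh_pow_mul_exp_le ht hx 1

theorem coshMoment_two {t : ℝ} (ht : 0 < t) :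
    coshMoment 2 t = coshMoment 0 t + coshMoment 1 t / t := by
  have hderiv : ∀ x ∈ Ioi (0 : ℝ), HasDerivAt (fun x => sinh x * exp (-t * cosh x))
      (cosh x ^ 1 * exp (-t * cosh x) - t * (cosh x ^ 2 * exp (-t * cosh x))
        + t * (cosh x ^ 0 * exp (-t * cosh x))) x := fun x _ => by
    refine ((hasDerivAt_sinh x).mul ((hasDerivAt_cosh x).const_mul (-t)).exp).congr_deriv ?_
    linear_combination (-t * exp (-t * cosh x)) * sinh_sq x
  have hint := integrableOn_cosh_pow_mul_exp ht
  have h := integral_Ioi_of_hasDerivAt_of_tendsto (by fun_prop : Continuous _).continuousWithinAt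
    hderiv (((hint 1).sub ((hint 2).const_mul t)).add ((hint 0).const_mul t))
    (tendsto_sinh_mul_exp_neg_cosh ht)
  rw [integral_add, integral_sub, integral_const_mul, integral_const_mul] at h
  · simp only [sinh_zero, zero_mul, sub_zero] at h
    change coshMoment 1 t - t * coshMoment 2 t + t * coshMoment 0 t = 0 at h
    field_simp
    linarith
  exacts [hint 1, (hint 2).const_mul t, (hint 1).sub ((hint 2).const_mul t), (hint 0).const_mul t]

section IteratedDerivEval

variable {𝕜 : Type*} [NontriviallyNormedField 𝕜]

theorem iteratedDeriv_eq_of_hasDerivAt {s : Set 𝕜} (hs : IsOpen s) {F : ℕ → 𝕜 → 𝕜}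
    (hF : ∀ n, ∀ t ∈ s, HasDerivAt (F n) (F (n + 1) t) t) (n : ℕ) :
    ∀ t ∈ s, iteratedDeriv n (F 0) t = F n t := by
  induction n with
  | zero => simp
  | succ n ih =>
    intro t ht
    have hloc : iteratedDeriv n (F 0) =ᶠ[𝓝 t] F n := eventually_of_mem (hs.mem_nhds ht) ih
    rw [iteratedDeriv_succ, hloc.deriv_eq, (hF n t ht).deriv]

variable {σ : Type*} (D : Derivation 𝕜 (MvPolynomial σ 𝕜) (MvPolynomial σ 𝕜))

theorem hasDerivAt_eval_of_derivation {v : 𝕜 → σ → 𝕜} {t : 𝕜}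
    (hv : ∀ i, HasDerivAt (fun s => v s i) (eval (v t) (D (X i))) t) (p : MvPolynomial σ 𝕜) :
    HasDerivAt (fun s => eval (v s) p) (eval (v t) (D p)) t := by
  induction p using MvPolynomial.induction_on with
  | C a => simpa using hasDerivAt_const t a
  | add p q hp hq =>
    simp only [map_add]
    exact hp.fun_add hq
  | mul_X p i hp =>
    simp only [map_mul, eval_X]
    refine (hp.fun_mul (hv i)).congr_deriv ?_
    simp only [Derivation.leibniz, smul_eq_mul, map_add, map_mul, eval_X]
    ring

theorem iteratedDeriv_eval_of_derivation {s : Set 𝕜} (hs : IsOpen s) {v : 𝕜 → σ → 𝕜}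
    (hv : ∀ t ∈ s, ∀ i, HasDerivAt (fun s => v s i) (eval (v t) (D (X i))) t)
    (p : MvPolynomial σ 𝕜) (n : ℕ) :
    ∀ t ∈ s, iteratedDeriv n (fun s => eval (v s) p) t = eval (v t) (D^[n] p) :=
  iteratedDeriv_eq_of_hasDerivAt (F := fun n s => eval (v s) (D^[n] p)) hs
    (fun n t ht => by
      simpa only [Function.iterate_succ_apply'] using
        hasDerivAt_eval_of_derivation D (hv t ht) (D^[n] p)) n

end IteratedDerivEval

/-- `X 0`, `X 1`, `X 2` stand for `f`, `f'`, `t⁻¹`, where `f'' = f - f' / t`. -/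
noncomputable def besselDerivation :
    Derivation ℝ (MvPolynomial (Fin 3) ℝ) (MvPolynomial (Fin 3) ℝ) :=
  mkDerivation ℝ ![X 1, X 0 - X 1 * X 2, -X 2 ^ 2]

@[simp]
theorem besselDerivation_X_zero : besselDerivation (X 0) = X 1 := mkDerivation_X _ _ _

@[simp]
theorem besselDerivation_X_one : besselDerivation (X 1) = X 0 - X 1 * X 2 := mkDerivation_X _ _ _

@[simp]
theorem besselDerivation_X_two : besselDerivation (X 2) = -X 2 ^ 2 := mkDerivation_X _ _ _

theorem besselDerivation_pow_four_ode {a b t : ℝ} (ht : t ≠ 0) :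
    t ^ 4 * eval ![a, b, t⁻¹] (besselDerivation^[5] (X 0 ^ 4))
      + 10 * t ^ 3 * eval ![a, b, t⁻¹] (besselDerivation^[4] (X 0 ^ 4))
      - (20 * t ^ 4 - 25 * t ^ 2) * eval ![a, b, t⁻¹] (besselDerivation^[3] (X 0 ^ 4))
      - (120 * t ^ 3 - 15 * t) * eval ![a, b, t⁻¹] (besselDerivation^[2] (X 0 ^ 4))
      + (64 * t ^ 4 - 152 * t ^ 2 + 1) * eval ![a, b, t⁻¹] (besselDerivation^[1] (X 0 ^ 4))
      + (128 * t ^ 3 - 32 * t) * a ^ 4 = 0 := by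
  simp only [Function.iterate_succ_apply', Function.iterate_zero_apply, Derivation.leibniz,
    Derivation.leibniz_pow, map_nsmul, map_add, map_sub, map_neg, smul_eq_mul,
    besselDerivation_X_zero, besselDerivation_X_one, besselDerivation_X_two, Nat.reduceSub]
  simp only [map_add, map_sub, map_neg, map_mul, map_pow, eval_X, nsmul_eq_mul, map_natCast,
    Matrix.cons_val_zero, Matrix.cons_val_one, Matrix.cons_val_two, Matrix.vecHead, Matrix.vecTail,
    Function.comp_apply, Fin.succ_zero_eq_one]
  field_simp
  ring

theorem pow_four_ode_of_bessel {f g : ℝ → ℝ}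
    (hf : ∀ t ∈ Ioi (0 : ℝ), HasDerivAt f (g t) t)
    (hg : ∀ t ∈ Ioi (0 : ℝ), HasDerivAt g (f t - g t / t) t) :
    ∀ t ∈ Ioi (0 : ℝ),
      t ^ 4 * iteratedDeriv 5 (fun s => f s ^ 4) t
        + 10 * t ^ 3 * iteratedDeriv 4 (fun s => f s ^ 4) t
        - (20 * t ^ 4 - 25 * t ^ 2) * iteratedDeriv 3 (fun s => f s ^ 4) t
        - (120 * t ^ 3 - 15 * t) * iteratedDeriv 2 (fun s => f s ^ 4) t
        + (64 * t ^ 4 - 152 * t ^ 2 + 1) * deriv (fun s => f s ^ 4) t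
        + (128 * t ^ 3 - 32 * t) * f t ^ 4 = 0 := by
  intro t ht
  have hv : ∀ s ∈ Ioi (0 : ℝ), ∀ i, HasDerivAt (fun r => ![f r, g r, r⁻¹] i)
      (eval ![f s, g s, s⁻¹] (besselDerivation (X i))) s := by
    intro s hs i
    fin_cases i
    · simpa using hf s hs
    · simpa [div_eq_mul_inv] using hg s hs
    · simpa using hasDerivAt_inv (ne_of_gt hs)
  have hpow : (fun s => f s ^ 4) = fun s => eval ![f s, g s, s⁻¹] (X 0 ^ 4) := by simp
  have h := iteratedDeriv_eval_of_derivation besselDerivation isOpen_Ioi hv (X 0 ^ 4)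
  rw [← iteratedDeriv_one, hpow, h 5 t ht, h 4 t ht, h 3 t ht, h 2 t ht, h 1 t ht]
  exact besselDerivation_pow_four_ode (ne_of_gt ht)

theorem K0_pow_four_ode : ∀ t ∈ Set.Ioi (0:ℝ),
    t ^ 4 * iteratedDeriv 5 y t + 10 * t ^ 3 * iteratedDeriv 4 y t
      - (20 * t ^ 4 - 25 * t ^ 2) * iteratedDeriv 3 y t
      - (120 * t ^ 3 - 15 * t) * iteratedDeriv 2 y t
      + (64 * t ^ 4 - 152 * t ^ 2 + 1) * deriv y t
      + (128 * t ^ 3 - 32 * t) * y t = 0 := by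
  have hK : K₀ = coshMoment 0 := funext fun t => by simp [K₀, coshMoment]
  refine pow_four_ode_of_bessel (f := K₀) (g := fun t => -coshMoment 1 t) ?_ ?_
  · intro t ht
    rw [hK]
    exact hasDerivAt_coshMoment ht 0
  · intro t ht
    refine (hasDerivAt_coshMoment ht 1).neg.congr_deriv ?_
    rw [hK, neg_neg, coshMoment_two ht]
    ring
end
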